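/- arXiv:1512.01046 — 3 statements merged into one kernel-verified Lean document; each statement's English description precedes it below -/
import Mathlib

section
/- Let (a_n) be a sequence of real numbers and N ≥ 1 an integer. Then limsup_{n→∞} (1/(nN)) Σ_{k=0}^{nN-1} a_k ≤ max_{0 ≤ ℓ ≤ N-1} limsup_{n→∞} (1/n) Σ_{k=0}^{n-1} a_{kN+ℓ}. -/
open Filter Finset

lemma block_sum (a : ℕ → ℝ) (N : ℕ) : ∀ n : ℕ,
    ∑ k ∈ Finset.range (n * N), a k
      = ∑ ℓ ∈ Finset.range N, ∑ k ∈ Finset.range n, a (k * N + ℓ) := by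
  intro n
  induction n with
  | zero => simp
  | succ n ih =>
    rw [Nat.succ_mul, Finset.sum_range_add, ih]
    simp [Finset.sum_range_succ, Finset.sum_add_distrib]

lemma limsup_sup'_le {ι : Type*} {s : Finset ι} (hs : s.Nonempty) (F : ι → ℕ → EReal) :
    Filter.limsup (fun n => s.sup' hs fun i => F i n) atTop
      ≤ s.sup' hs fun i => Filter.limsup (F i) atTop := by
  induction hs using Finset.Nonempty.cons_induction with
  | singleton a => simp
  | cons a s h hs ih =>
    have : (fun n => (Finset.cons a s h).sup' (Finset.cons_nonempty h) fun i => F i n)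
        = fun n => max (F a n) (s.sup' hs fun i => F i n) := by
      ext n; rw [Finset.sup'_cons]
    rw [this, _root_.limsup_max, Finset.sup'_cons (H := hs)]
    exact max_le_max le_rfl ih

/-- Lemma on limsup of averages along residue classes (Lemma `liminf of average`):
limsup of the full Cesàro averages over blocks of length N is at most the maximum over
ℓ ∈ {0,…,N-1} of the limsup of the averages along the arithmetic progression kN+ℓ.
Limsups are taken in the extended reals. -/
theorem stmt0 (a : ℕ → ℝ) (N : ℕ) (hN : 1 ≤ N) :
    Filter.limsup
        (fun n : ℕ =>
          ((1 / ((n : ℝ) * (N : ℝ)) * ∑ k ∈ Finset.range (n * N), a k : ℝ) : EReal)) atTop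
      ≤ (Finset.range N).sup' (Finset.nonempty_range_iff.mpr (by omega))
          (fun ℓ =>
            Filter.limsup
              (fun n : ℕ =>
                ((1 / (n : ℝ) * ∑ k ∈ Finset.range n, a (k * N + ℓ) : ℝ) : EReal)) atTop) := by
  have hNne : (Finset.range N).Nonempty := Finset.nonempty_range_iff.mpr (by omega)
  have hNR : (N : ℝ) ≠ 0 := by positivity
  set g : ℕ → ℕ → EReal := fun ℓ n =>
    ((1 / (n : ℝ) * ∑ k ∈ Finset.range n, a (k * N + ℓ) : ℝ) : EReal) with hg
  have key : ∀ n : ℕ,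
      ((1 / ((n : ℝ) * (N : ℝ)) * ∑ k ∈ Finset.range (n * N), a k : ℝ) : EReal)
        ≤ (Finset.range N).sup' hNne (fun ℓ => g ℓ n) := by
    intro n
    rcases Nat.eq_zero_or_pos n with hn | hn
    · subst hn
      simp only [hg]
      obtain ⟨ℓ, hℓ, hEq⟩ := Finset.exists_mem_eq_sup' hNne
        (fun ℓ => ((1 / ((0:ℕ) : ℝ) * ∑ k ∈ Finset.range 0, a (k * N + ℓ) : ℝ) : EReal))
      simp only [hEq]
      simp
    · have hnR : (n : ℝ) ≠ 0 := by positivity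
      -- real-valued residue averages
      set G : ℕ → ℝ := fun ℓ => 1 / (n : ℝ) * ∑ k ∈ Finset.range n, a (k * N + ℓ) with hG
      obtain ⟨ℓ₀, hℓ₀, hEq⟩ := Finset.exists_mem_eq_sup' hNne G
      have hbound : 1 / ((n : ℝ) * (N : ℝ)) * ∑ k ∈ Finset.range (n * N), a k
          ≤ G ℓ₀ := by
        rw [block_sum a N n]
        have h1 : 1 / ((n : ℝ) * (N : ℝ)) * ∑ ℓ ∈ Finset.range N, ∑ k ∈ Finset.range n,
            a (k * N + ℓ) = (1 / (N : ℝ)) * ∑ ℓ ∈ Finset.range N, G ℓ := by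
          rw [Finset.mul_sum, Finset.mul_sum]
          congr 1; ext ℓ
          simp only [hG]
          rw [one_div, one_div, mul_inv]
          ring
        rw [h1]
        have h2 : ∑ ℓ ∈ Finset.range N, G ℓ ≤ (N : ℝ) * G ℓ₀ := by
          calc ∑ ℓ ∈ Finset.range N, G ℓ ≤ (Finset.range N).card • G ℓ₀ := by
                apply Finset.sum_le_card_nsmul
                intro ℓ hℓ
                rw [← hEq]
                exact Finset.le_sup' G hℓ
            _ = (N : ℝ) * G ℓ₀ := by simp [nsmul_eq_mul]
        calc (1 / (N : ℝ)) * ∑ ℓ ∈ Finset.range N, G ℓ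
            ≤ (1 / (N : ℝ)) * ((N : ℝ) * G ℓ₀) := by
              apply mul_le_mul_of_nonneg_left h2 (by positivity)
          _ = G ℓ₀ := by field_simp
      calc ((1 / ((n : ℝ) * (N : ℝ)) * ∑ k ∈ Finset.range (n * N), a k : ℝ) : EReal)
          ≤ ((G ℓ₀ : ℝ) : EReal) := by exact_mod_cast hbound
        _ ≤ (Finset.range N).sup' hNne (fun ℓ => g ℓ n) :=
            Finset.le_sup' (f := fun ℓ => g ℓ n) hℓ₀
  calc Filter.limsup
        (fun n : ℕ =>
          ((1 / ((n : ℝ) * (N : ℝ)) * ∑ k ∈ Finset.range (n * N), a k : ℝ) : EReal)) atTop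
      ≤ Filter.limsup (fun n => (Finset.range N).sup' hNne (fun ℓ => g ℓ n)) atTop :=
        Filter.limsup_le_limsup (Filter.Eventually.of_forall key)
    _ ≤ (Finset.range N).sup' hNne (fun ℓ => Filter.limsup (g ℓ) atTop) :=
        limsup_sup'_le hNne g
    _ ≤ _ := le_refl _
end

section
/- Let K be a compact topological space, (L_n : K → ℝ) a sequence of continuous functions such that for each n, m and each x, L_{n+m}(x) ≥ L_n(x) + L_m(x), and suppose that for every x ∈ K, sup_n L_n(x)/n > 0. Then there exists a single positive integer n₀ such that L_{n₀}(x) > 0 for every x ∈ K. -/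
/-- Compactness argument: if `L n : K → ℝ` are continuous on a compact space,
pointwise superadditive, and for each `x` some `L n x` (with `n ≥ 1`) is positive,
then there is a single `n₀ ≥ 1` with `L n₀ x > 0` for every `x`. -/
theorem stmt4 {K : Type*} [TopologicalSpace K] [CompactSpace K]
    (L : ℕ → K → ℝ) (hcont : ∀ n, Continuous (L n))
    (hsuper : ∀ n m : ℕ, 1 ≤ n → 1 ≤ m → ∀ x, L n x + L m x ≤ L (n + m) x)
    (hpos : ∀ x, ∃ n : ℕ, 1 ≤ n ∧ 0 < L n x) :
    ∃ n₀ : ℕ, 1 ≤ n₀ ∧ ∀ x, 0 < L n₀ x := by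
  -- superadditivity iterated
  have hmul : ∀ k : ℕ, 1 ≤ k → ∀ n : ℕ, 1 ≤ n → ∀ x, (k : ℝ) * L n x ≤ L (k * n) x := by
    intro k hk
    induction k with
    | zero => omega
    | succ k ih =>
      intro n hn x
      rcases Nat.eq_zero_or_pos k with hk0 | hk0
      · subst hk0; simp
      · have h1 := ih hk0 n hn x
        have h2 := hsuper (k * n) n (Nat.mul_pos hk0 hn) hn x
        have : (k + 1) * n = k * n + n := by ring
        rw [this]
        push_cast
        nlinarith
  -- open cover
  have hopen : ∀ n : ℕ, IsOpen {x : K | 0 < L (n + 1) x} :=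
    fun n => isOpen_lt continuous_const (hcont (n + 1))
  have hcover : (Set.univ : Set K) ⊆ ⋃ n : ℕ, {x : K | 0 < L (n + 1) x} := by
    intro x _
    obtain ⟨n, hn, hx⟩ := hpos x
    exact Set.mem_iUnion.2 ⟨n - 1, by simpa [Nat.sub_add_cancel hn] using hx⟩
  obtain ⟨t, ht⟩ := isCompact_univ.elim_finite_subcover _ hopen hcover
  refine ⟨∏ n ∈ t, (n + 1), Nat.one_le_iff_ne_zero.2 (by positivity), ?_⟩
  intro x
  obtain ⟨n, hnt, hx⟩ : ∃ n ∈ t, 0 < L (n + 1) x := by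
    have := ht (Set.mem_univ x)
    simpa using this
  have hdvd : (n + 1) ∣ ∏ m ∈ t, (m + 1) := Finset.dvd_prod_of_mem _ hnt
  obtain ⟨c, hc⟩ := hdvd
  have hc1 : 1 ≤ c := by
    rcases Nat.eq_zero_or_pos c with h | h
    · exfalso
      have : (∏ m ∈ t, (m + 1)) ≠ 0 := by positivity
      simp [h, hc] at this
    · exact h
  have := hmul c hc1 (n + 1) (Nat.le_add_left 1 n) x
  have hrw : c * (n + 1) = ∏ m ∈ t, (m + 1) := by rw [hc, Nat.mul_comm]
  rw [hrw] at this
  have hpos' : (0 : ℝ) < (c : ℝ) * L (n + 1) x := by positivity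
  linarith
end

section
/- Let a : ℕ → ℝ be a bounded sequence and c > 0. If limsup_{n→∞} (1/(nN)) Σ_{k=0}^{nN-1} a_k ≥ c, then there exists ℓ with 0 ≤ ℓ ≤ N−1 such that limsup_{n→∞} (1/n) Σ_{k=0}^{n-1} a_{kN+ℓ} ≥ c. -/
open Filter Finset

lemma sum_block_split (a : ℕ → ℝ) (N : ℕ) (n : ℕ) :
    ∑ k ∈ Finset.range (n * N), a k
      = ∑ ℓ ∈ Finset.range N, ∑ k ∈ Finset.range n, a (k * N + ℓ) := by
  induction n with
  | zero => simp
  | succ n ih =>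
    rw [Nat.succ_mul, Finset.sum_range_add, ih]
    rw [← Finset.sum_add_distrib]
    refine Finset.sum_congr rfl fun ℓ _ => ?_
    rw [Finset.sum_range_succ]

lemma avg_abs_le (b : ℕ → ℝ) (Cb : ℝ) (hb : ∀ k, |b k| ≤ Cb) (n : ℕ) :
    |1 / (n : ℝ) * ∑ k ∈ Finset.range n, b k| ≤ Cb := by
  have hCb : 0 ≤ Cb := (abs_nonneg (b 0)).trans (hb 0)
  rcases Nat.eq_zero_or_pos n with h0 | h0
  · simp [h0, hCb]
  · have hn : (0 : ℝ) < n := by exact_mod_cast h0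
    rw [abs_mul]
    have h1 : |1 / (n : ℝ)| = 1 / n := abs_of_nonneg (by positivity)
    have h2 : |∑ k ∈ Finset.range n, b k| ≤ n * Cb := by
      calc |∑ k ∈ Finset.range n, b k| ≤ ∑ k ∈ Finset.range n, |b k| :=
            Finset.abs_sum_le_sum_abs _ _
        _ ≤ ∑ _k ∈ Finset.range n, Cb := Finset.sum_le_sum fun k _ => hb k
        _ = n * Cb := by simp [mul_comm]
    calc |1 / (n : ℝ)| * |∑ k ∈ Finset.range n, b k| ≤ (1 / n) * (n * Cb) := by
          rw [h1]; exact mul_le_mul_of_nonneg_left h2 (by positivity)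
      _ = Cb := by field_simp

/-- If `a` is bounded and the limsup of the full Cesàro averages over blocks of length `N`
is at least `c > 0`, then for some residue class `ℓ ∈ {0,…,N-1}` the limsup of the averages
along the progression `kN + ℓ` is at least `c`. -/
theorem stmt8 (a : ℕ → ℝ) (Cb : ℝ) (hb : ∀ n, |a n| ≤ Cb) (N : ℕ) (hN : 1 ≤ N)
    (c : ℝ) (hc : 0 < c)
    (h : c ≤ Filter.limsup
        (fun n : ℕ => 1 / ((n : ℝ) * (N : ℝ)) * ∑ k ∈ Finset.range (n * N), a k) atTop) :
    ∃ ℓ : ℕ, ℓ < N ∧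
      c ≤ Filter.limsup
        (fun n : ℕ => 1 / (n : ℝ) * ∑ k ∈ Finset.range n, a (k * N + ℓ)) atTop := by
  by_contra hcon
  push_neg at hcon
  set g : ℕ → ℕ → ℝ := fun ℓ n => 1 / (n : ℝ) * ∑ k ∈ Finset.range n, a (k * N + ℓ) with hg
  set f : ℕ → ℝ := fun n => 1 / ((n : ℝ) * (N : ℝ)) * ∑ k ∈ Finset.range (n * N), a k with hf
  -- boundedness of each g ℓ
  have hgbdd : ∀ ℓ, ∀ n : ℕ, |g ℓ n| ≤ Cb := fun ℓ n =>
    avg_abs_le (fun k => a (k * N + ℓ)) Cb (fun k => hb _) n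
  have hgB : ∀ ℓ, atTop.IsBoundedUnder (· ≤ ·) (g ℓ) := fun ℓ =>
    Filter.isBoundedUnder_of ⟨Cb, fun n => (abs_le.mp (hgbdd ℓ n)).2⟩
  -- the max of the limsups
  have hNe : (Finset.range N).Nonempty := ⟨0, Finset.mem_range.mpr hN⟩
  set S : Finset ℝ := (Finset.range N).image fun ℓ => limsup (g ℓ) atTop with hS
  have hSne : S.Nonempty := hNe.image _
  set d : ℝ := S.max' hSne with hd
  have hdlt : d < c := by
    obtain ⟨ℓ, hℓ, hℓ'⟩ := Finset.mem_image.mp (S.max'_mem hSne)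
    rw [hd, ← hℓ']
    exact hcon ℓ (Finset.mem_range.mp hℓ)
  have hdc : d < (d + c) / 2 := by linarith
  -- eventually each average is below (d+c)/2
  have hev : ∀ᶠ n in atTop, ∀ ℓ ∈ Finset.range N, g ℓ n < (d + c) / 2 := by
    rw [Filter.eventually_all_finset]
    intro ℓ hℓ
    have hmem : limsup (g ℓ) atTop ∈ S := Finset.mem_image_of_mem _ hℓ
    have : limsup (g ℓ) atTop < (d + c) / 2 :=
      lt_of_le_of_lt (S.le_max' _ hmem) hdc
    exact eventually_lt_of_limsup_lt this (hgB ℓ)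
  -- f n = (1/N) * ∑ g ℓ n
  have hfg : ∀ n, f n = (1 / (N : ℝ)) * ∑ ℓ ∈ Finset.range N, g ℓ n := by
    intro n
    rw [hf, hg]
    simp only
    rw [sum_block_split a N n, Finset.mul_sum, Finset.mul_sum]
    refine Finset.sum_congr rfl fun ℓ _ => ?_
    rw [← mul_assoc]
    congr 1
    rw [div_mul_div_comm, one_mul, mul_comm]
  have hNpos : (0 : ℝ) < N := by exact_mod_cast hN
  -- eventually f n ≤ (d+c)/2
  have hfev : ∀ᶠ n in atTop, f n ≤ (d + c) / 2 := by
    filter_upwards [hev] with n hn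
    rw [hfg n]
    calc (1 / (N : ℝ)) * ∑ ℓ ∈ Finset.range N, g ℓ n
        ≤ (1 / (N : ℝ)) * ∑ _ℓ ∈ Finset.range N, (d + c) / 2 := by
          apply mul_le_mul_of_nonneg_left _ (by positivity)
          exact Finset.sum_le_sum fun ℓ hℓ => (hn ℓ hℓ).le
      _ = (d + c) / 2 := by
          rw [Finset.sum_const, Finset.card_range, nsmul_eq_mul]
          field_simp
  -- f is bounded below, hence cobounded
  have hfb : atTop.IsBoundedUnder (· ≥ ·) f := by
    refine Filter.isBoundedUnder_of ⟨-Cb, fun (n : ℕ) => ?_⟩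
    have := avg_abs_le a Cb hb (n * N)
    have h2 : (1 : ℝ) / ((n : ℝ) * N) = 1 / ((n * N : ℕ) : ℝ) := by push_cast; ring_nf
    rw [hf]; simp only
    rw [h2]
    exact (abs_le.mp this).1
  have : limsup f atTop ≤ (d + c) / 2 :=
    limsup_le_of_le hfb.isCoboundedUnder_le hfev
  have hlt : limsup f atTop < c := lt_of_le_of_lt this (by linarith)
  exact absurd h (not_le.mpr hlt)
end
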